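/- arXiv:quant-ph/0304112 — 9 statements merged into one kernel-verified Lean document; each statement's English description precedes it below -/
import Mathlib

section
/- Fix a real v ≥ 4 and set δ = 2/√v. For a ∈ {0,1} let ψ_a = √δ·(e_a ⊗ e_a) + √(1−δ)·(e_2 ⊗ e_2) ∈ ℂ⁹ (indexed by Fin 3 × Fin 3). Let d ≥ 1 and suppose ρ_init, ρ_0, ρ_1 are positive semidefinite complex matrices indexed by (Fin d × Fin 3 × Fin 3) and ρ_{00}, ρ_{01}, ρ_{10}, ρ_{11} are positive semidefinite complex matrices indexed by (Fin 3 × Fin 3), satisfying: (i) tr(ρ_init) = 1; (ii) for each b ∈ {0,1} and all β, β' ∈ Fin 3, Σ_{x ∈ Fin d, α ∈ Fin 3} ρ_init((x,α,β),(x,α,β')) = Σ_{x ∈ Fin d, α ∈ Fin 3} ρ_b((x,α,β),(x,α,β')); (iii) for each b ∈ {0,1} and all (α,β),(α',β') ∈ Fin 3 × Fin 3, Σ_{x ∈ Fin d} ρ_b((x,α,β),(x,α',β')) = ρ_{b0}((α,β),(α',β')) + ρ_{b1}((α,β),(α',β')). Then (1/2)·Σ_{a,b ∈ {0,1}} (v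 + [a=b])·Re⟨ψ_a, ρ_{ba} ψ_a⟩ − v ≤ 1/2 + 1/(8√v), where [a=b] equals 1 if a = b and 0 otherwise. (This is the statement that a dishonest Alice's expected win in the two-party coin-flipping protocol with penalty v is at most 1/2 + 1/(8√v).) -/
/-
Only diagonal entries of the final states matter. For positive semidefinite `σ_{ba}`,
`Re ⟨ψ_a, σ_{ba} ψ_a⟩ ≤ (√δ √s + √(1-δ) √t)²`, where `s`, `t` are the diagonal entries of
`σ_{ba}` at `e_a ⊗ e_a` and `e_2 ⊗ e_2` (a `2 × 2` principal minor argument). Since Alice cannot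
touch Bob's register, `s ≤ m_a` and `t_{b0} + t_{b1} ≤ m_2`, where `m` is the diagonal of Bob's
marginal of `ρ_init`, a probability vector. Minkowski's inequality merges the two values of `a`,
leaving a quadratic problem in three amplitudes whose value `2v + 1 + 1/(4√v)` is certified by
an explicit sum of squares.
-/

open Matrix
open scoped ComplexOrder

/-- The protocol state `ψ_a = √δ·e_a⊗e_a + √(1-δ)·e_2⊗e_2 ∈ ℂ³ ⊗ ℂ³` for `a ∈ {0,1}`. -/
noncomputable def psiPen (δ : ℝ) (a : Fin 2) : Fin 3 × Fin 3 → ℂ := fun p =>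
  if p.1 = Fin.castLE (by norm_num) a ∧ p.2 = Fin.castLE (by norm_num) a then
    (Real.sqrt δ : ℂ)
  else if p.1 = 2 ∧ p.2 = 2 then (Real.sqrt (1 - δ) : ℂ) else 0

lemma psiPen_eq (δ : ℝ) (a : Fin 2) :
    psiPen δ a = Pi.single (Fin.castLE (by norm_num) a, Fin.castLE (by norm_num) a) (√δ : ℂ)
      + Pi.single (2, 2) (√(1 - δ) : ℂ) := by
  funext ⟨p, q⟩
  fin_cases a <;> fin_cases p <;> fin_cases q <;> simp [psiPen]

namespace Matrix.PosSemidef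

variable {ι : Type*} [Fintype ι] [DecidableEq ι] {M : Matrix ι ι ℂ}

omit [Fintype ι] [DecidableEq ι] in
lemma re_apply_self_nonneg (hM : M.PosSemidef) (i : ι) : 0 ≤ (M i i).re :=
  (Complex.le_def.mp hM.diag_nonneg).1

omit [Fintype ι] [DecidableEq ι] in
lemma re_apply_le_sqrt_mul_sqrt (hM : M.PosSemidef) (i j : ι) :
    (M i j).re ≤ √(M i i).re * √(M j j).re := by
  have hdet := (hM.submatrix ![i, j]).det_nonneg
  rw [det_fin_two] at hdet
  simp only [submatrix_apply, cons_val_zero, cons_val_one] at hdet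
  rw [← hM.isHermitian.apply j i, Complex.star_def, Complex.mul_conj] at hdet
  have hii : (M i i).im = 0 := (Complex.le_def.mp (hM.diag_nonneg (i := i))).2.symm
  have hjj : (M j j).im = 0 := (Complex.le_def.mp (hM.diag_nonneg (i := j))).2.symm
  have hre := (Complex.le_def.mp hdet).1
  simp only [Complex.sub_re, Complex.zero_re, Complex.ofReal_re, Complex.mul_re, hii, hjj] at hre
  rw [← Real.sqrt_mul (Complex.le_def.mp hM.diag_nonneg).1]
  refine (le_abs_self _).trans (Real.abs_le_sqrt ?_)
  nlinarith [Complex.re_sq_le_normSq (M i j)]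

lemma re_dotProduct_single_add_single_le (hM : M.PosSemidef) (i j : ι)
    {x y : ℝ} (hx : 0 ≤ x) (hy : 0 ≤ y) :
    (star (Pi.single i (x : ℂ) + Pi.single j (y : ℂ)) ⬝ᵥ
      M *ᵥ (Pi.single i (x : ℂ) + Pi.single j (y : ℂ))).re ≤
      (x * √(M i i).re + y * √(M j j).re) ^ 2 := by
  have hexpand : star (Pi.single i (x : ℂ) + Pi.single j (y : ℂ)) ⬝ᵥ
      M *ᵥ (Pi.single i (x : ℂ) + Pi.single j (y : ℂ)) =
      ((x ^ 2 : ℝ) : ℂ) * M i i + ((x * y : ℝ) : ℂ) * (M i j + M j i) +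
        ((y ^ 2 : ℝ) : ℂ) * M j j := by
    simp only [star_add, ← Pi.single_star, add_dotProduct, mulVec_add, dotProduct_add,
      mulVec_single, single_dotProduct, RCLike.star_def, Complex.conj_ofReal, Pi.smul_apply,
      col_apply, MulOpposite.smul_eq_mul_unop, MulOpposite.unop_op, Complex.ofReal_pow,
      Complex.ofReal_mul]
    ring
  have hji : (M j i).re = (M i j).re := by
    rw [← hM.isHermitian.apply i j, Complex.star_def, Complex.conj_re]
  have hij_le := hM.re_apply_le_sqrt_mul_sqrt i j
  rw [hexpand]
  simp only [Complex.add_re, Complex.re_ofReal_mul, hji]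
  have hii := Real.sq_sqrt (hM.re_apply_self_nonneg i)
  have hjj := Real.sq_sqrt (hM.re_apply_self_nonneg j)
  nlinarith [mul_le_mul_of_nonneg_left hij_le (mul_nonneg hx hy)]

end Matrix.PosSemidef

section Marginal

variable {X A B : Type*} [Fintype X] [Fintype A]

def marginalDiag (ρ : Matrix (X × A × B) (X × A × B) ℂ) (β : B) : ℝ :=
  (∑ x, ∑ α, ρ (x, α, β) (x, α, β)).re

lemma marginalDiag_nonneg {ρ : Matrix (X × A × B) (X × A × B) ℂ} (hρ : ρ.PosSemidef) (β : B) :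
    0 ≤ marginalDiag ρ β := by
  simp only [marginalDiag, Complex.re_sum]
  exact Finset.sum_nonneg fun x _ => Finset.sum_nonneg fun α _ => hρ.re_apply_self_nonneg _

lemma sum_marginalDiag [Fintype B] (ρ : Matrix (X × A × B) (X × A × B) ℂ) :
    ∑ β, marginalDiag ρ β = ρ.trace.re := by
  simp only [marginalDiag, trace, diag, Fintype.sum_prod_type, ← Complex.re_sum]
  rw [Finset.sum_comm]
  congr 1
  exact Finset.sum_congr rfl fun x _ => Finset.sum_comm

lemma sum_re_apply_le_marginalDiag {ι : Type*} [Fintype ι]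
    {ρI ρ : Matrix (X × A × B) (X × A × B) ℂ}
    {σ : ι → Matrix (A × B) (A × B) ℂ} (hσ : ∀ a, (σ a).PosSemidef)
    (hB : ∀ β, ∑ x, ∑ α, ρI (x, α, β) (x, α, β) = ∑ x, ∑ α, ρ (x, α, β) (x, α, β))
    (hmeas : ∀ α β, ∑ x, ρ (x, α, β) (x, α, β) = ∑ a, σ a (α, β) (α, β)) (α : A) (β : B) :
    ∑ a, (σ a (α, β) (α, β)).re ≤ marginalDiag ρI β := by
  have hsum : ∑ α', ∑ a, σ a (α', β) (α', β) = ∑ x, ∑ α', ρI (x, α', β) (x, α', β) := by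
    calc ∑ α', ∑ a, σ a (α', β) (α', β) = ∑ α', ∑ x, ρ (x, α', β) (x, α', β) :=
          Finset.sum_congr rfl fun α' _ => (hmeas α' β).symm
      _ = ∑ x, ∑ α', ρ (x, α', β) (x, α', β) := Finset.sum_comm
      _ = _ := (hB β).symm
  simp only [marginalDiag, ← hsum, Complex.re_sum]
  exact Finset.single_le_sum (f := fun α' => ∑ a, (σ a (α', β) (α', β)).re)
    (fun α' _ => Finset.sum_nonneg fun a _ => (hσ a).re_apply_self_nonneg _) (Finset.mem_univ α)

end Marginal

lemma objective_le_of_gap {w P Q : ℝ} (hw : 2 < w)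
    (hgap : w * (P ^ 2 + Q ^ 2) - (P + Q) ^ 2 ≤ 2 * (w - 2)) :
    (w ^ 2 + 1) * P ^ 2 + w ^ 2 * Q ^ 2 ≤ 2 * w ^ 2 + 1 + 1 / (4 * w) := by
  have hK : 0 < 8 * w ^ 3 - 4 * w ^ 2 + 13 * w - 1 := by nlinarith
  have hL : 0 < 8 * w ^ 3 + 4 * w + 1 := by positivity
  have hc : 0 < 2 * (w - 2) * (8 * w ^ 3 - 4 * w ^ 2 + 13 * w - 1) := by
    have : 0 < w - 2 := by linarith
    positivity
  rw [show 2 * w ^ 2 + 1 + 1 / (4 * w) = (8 * w ^ 3 + 4 * w + 1) / (4 * w) by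
    field_simp; ring, le_div_iff₀ (by positivity)]
  have key : (8 * w ^ 3 + 4 * w + 1 - ((w ^ 2 + 1) * P ^ 2 + w ^ 2 * Q ^ 2) * (4 * w)) *
        (2 * (w - 2) * (8 * w ^ 3 - 4 * w ^ 2 + 13 * w - 1)) =
      (8 * w ^ 3 - 4 * w ^ 2 + 13 * w - 1) * (8 * w ^ 3 + 4 * w + 1) *
          (2 * (w - 2) - (w * (P ^ 2 + Q ^ 2) - (P + Q) ^ 2)) +
        ((8 * w ^ 3 - 4 * w ^ 2 + 13 * w - 1) * P - (8 * w ^ 3 + 4 * w + 1) * Q) ^ 2 +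
        w * (w - 2) * (32 * w + 9) * Q ^ 2 := by ring
  have hnonneg : 0 ≤ (8 * w ^ 3 + 4 * w + 1 - ((w ^ 2 + 1) * P ^ 2 + w ^ 2 * Q ^ 2) * (4 * w)) *
      (2 * (w - 2) * (8 * w ^ 3 - 4 * w ^ 2 + 13 * w - 1)) := by
    rw [key]
    have : 0 ≤ w * (w - 2) * (32 * w + 9) * Q ^ 2 := by
      have : 0 ≤ w - 2 := by linarith
      positivity
    nlinarith [mul_pos hK hL,
      sq_nonneg ((8 * w ^ 3 - 4 * w ^ 2 + 13 * w - 1) * P - (8 * w ^ 3 + 4 * w + 1) * Q)]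
  linarith [(mul_nonneg_iff_of_pos_right hc).mp hnonneg]

lemma objective_le_of_budgets {w U A C μ : ℝ} (hw : 2 ≤ w)
    (hμ : 0 ≤ μ) (hU2 : w * U ^ 2 ≤ 2 * (1 - μ)) (hAC : w * (A ^ 2 + C ^ 2) ≤ 2 * (w - 2) * μ) :
    (w ^ 2 + 1) * (U + A) ^ 2 + w ^ 2 * (U + C) ^ 2 ≤ 2 * w ^ 2 + 1 + 1 / (4 * w) := by
  rcases hw.eq_or_lt with rfl | hw
  · obtain rfl : A = 0 := by nlinarith
    obtain rfl : C = 0 := by nlinarith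
    norm_num
    nlinarith
  · refine objective_le_of_gap hw ?_
    nlinarith [sq_nonneg ((w - 2) * U - (A + C)),
      mul_le_mul_of_nonneg_left hU2 (by linarith : (0:ℝ) ≤ w - 2)]

lemma minkowski_sq_sqrt {x y p q r s : ℝ} (hx : 0 ≤ x) (hy : 0 ≤ y) (hp : 0 ≤ p) (hq : 0 ≤ q)
    (hr : 0 ≤ r) (hs : 0 ≤ s) :
    (x * √p + y * √r) ^ 2 + (x * √q + y * √s) ^ 2 ≤ (x * √(p + q) + y * √(r + s)) ^ 2 := by
  have hcs : √p * √r + √q * √s ≤ √(p + q) * √(r + s) := by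
    rw [← Real.sqrt_mul (add_nonneg hp hq) (r + s)]
    apply Real.le_sqrt_of_sq_le
    nlinarith [sq_nonneg (√p * √s - √q * √r), Real.sq_sqrt hp, Real.sq_sqrt hq,
      Real.sq_sqrt hr, Real.sq_sqrt hs]
  simp only [add_sq, mul_pow, Real.sq_sqrt hp, Real.sq_sqrt hq, Real.sq_sqrt hr, Real.sq_sqrt hs,
    Real.sq_sqrt (add_nonneg hp hq), Real.sq_sqrt (add_nonneg hr hs)]
  nlinarith [mul_le_mul_of_nonneg_left hcs (mul_nonneg hx hy)]

lemma cheating_payoff_le {w μ : ℝ} {m : Fin 2 → ℝ} {t : Fin 2 → Fin 2 → ℝ} (hw : 2 ≤ w)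
    (hm : ∀ a, 0 ≤ m a) (hμ : 0 ≤ μ) (ht : ∀ b a, 0 ≤ t b a) (hmμ : m 0 + m 1 + μ ≤ 1)
    (htμ : ∀ b, t b 0 + t b 1 ≤ μ) :
    ∑ a, ∑ b, (w ^ 2 + if a = b then 1 else 0) *
      (√(2 / w) * √(m a) + √(1 - 2 / w) * √(t b a)) ^ 2 ≤ 2 * w ^ 2 + 1 + 1 / (4 * w) := by
  have hw0 : 0 < w := by linarith
  have hδ : 2 / w ≤ 1 := (div_le_one hw0).mpr hw
  have hx2 : √(2 / w) ^ 2 = 2 / w := Real.sq_sqrt (by positivity)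
  have hy2 : √(1 - 2 / w) ^ 2 = 1 - 2 / w := Real.sq_sqrt (by linarith)
  have hdiag := minkowski_sq_sqrt (Real.sqrt_nonneg (2 / w)) (Real.sqrt_nonneg (1 - 2 / w))
    (hm 0) (hm 1) (ht 0 0) (ht 1 1)
  have hoff := minkowski_sq_sqrt (Real.sqrt_nonneg (2 / w)) (Real.sqrt_nonneg (1 - 2 / w))
    (hm 0) (hm 1) (ht 1 0) (ht 0 1)
  have hU : w * (√(2 / w) * √(m 0 + m 1)) ^ 2 ≤ 2 * (1 - μ) := by
    rw [mul_pow, hx2, Real.sq_sqrt (add_nonneg (hm 0) (hm 1))]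
    field_simp
    linarith
  have hAC : w * ((√(1 - 2 / w) * √(t 0 0 + t 1 1)) ^ 2 + (√(1 - 2 / w) * √(t 1 0 + t 0 1)) ^ 2)
      ≤ 2 * (w - 2) * μ := by
    rw [mul_pow, mul_pow, hy2, Real.sq_sqrt (add_nonneg (ht 0 0) (ht 1 1)),
      Real.sq_sqrt (add_nonneg (ht 1 0) (ht 0 1))]
    field_simp
    nlinarith [htμ 0, htμ 1]
  have hbound := objective_le_of_budgets hw hμ hU hAC
  simp only [Fin.sum_univ_two, Fin.isValue, if_true, zero_ne_one, one_ne_zero, if_false, add_zero]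
  linarith [mul_le_mul_of_nonneg_left hdiag (by positivity : (0 : ℝ) ≤ w ^ 2 + 1),
    mul_le_mul_of_nonneg_left hoff (sq_nonneg w)]

theorem stmt_0_general (v : ℝ) (hv : 4 ≤ v) (d : ℕ)
    (ρI : Matrix (Fin d × Fin 3 × Fin 3) (Fin d × Fin 3 × Fin 3) ℂ)
    (ρ : Fin 2 → Matrix (Fin d × Fin 3 × Fin 3) (Fin d × Fin 3 × Fin 3) ℂ)
    (σ : Fin 2 → Fin 2 → Matrix (Fin 3 × Fin 3) (Fin 3 × Fin 3) ℂ)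
    (hρI : ρI.PosSemidef) (hσ : ∀ b a, (σ b a).PosSemidef)
    (htr : ρI.trace = 1)
    (hBfix : ∀ b : Fin 2, ∀ β β' : Fin 3,
      ∑ x : Fin d, ∑ α : Fin 3, ρI (x, α, β) (x, α, β') =
      ∑ x : Fin d, ∑ α : Fin 3, ρ b (x, α, β) (x, α, β'))
    (hmeas : ∀ b : Fin 2, ∀ α β α' β' : Fin 3,
      ∑ x : Fin d, ρ b (x, α, β) (x, α', β') =
      σ b 0 (α, β) (α', β') + σ b 1 (α, β) (α', β')) :
    (1 / 2) * (∑ a : Fin 2, ∑ b : Fin 2,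
      (v + if a = b then 1 else 0) *
        (star (psiPen (2 / Real.sqrt v) a) ⬝ᵥ
          (σ b a).mulVec (psiPen (2 / Real.sqrt v) a)).re) - v ≤
    1 / 2 + 1 / (8 * Real.sqrt v) := by
  set w := √v
  have hw : 2 ≤ w := (Real.le_sqrt zero_le_two (by linarith)).mpr (by linarith)
  have hvw : v = w ^ 2 := (Real.sq_sqrt (by linarith)).symm
  set m := marginalDiag ρI
  set t : Fin 2 → Fin 2 → ℝ := fun b a => (σ b a (2, 2) (2, 2)).re
  have hσ_sum : ∀ b α β, ∑ a, (σ b a (α, β) (α, β)).re ≤ m β := fun b =>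
    sum_re_apply_le_marginalDiag (hσ b) (fun β => hBfix b β β)
      (fun α β => by rw [hmeas, Fin.sum_univ_two])
  have hσ_diag : ∀ b a α β, (σ b a (α, β) (α, β)).re ≤ m β := fun b a α β =>
    (Finset.single_le_sum (fun a' _ => (hσ b a').re_apply_self_nonneg (α, β))
      (Finset.mem_univ a)).trans (hσ_sum b α β)
  have hm1 : m 0 + m 1 + m 2 ≤ 1 := by
    rw [← Fin.sum_univ_three, sum_marginalDiag, htr, Complex.one_re]
  have hterm : ∀ a b, (star (psiPen (2 / w) a) ⬝ᵥ (σ b a) *ᵥ psiPen (2 / w) a).re ≤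
      (√(2 / w) * √(m (Fin.castLE (by norm_num) a)) + √(1 - 2 / w) * √(t b a)) ^ 2 := by
    intro a b
    rw [psiPen_eq]
    refine ((hσ b a).re_dotProduct_single_add_single_le _ _ (Real.sqrt_nonneg _)
      (Real.sqrt_nonneg _)).trans ?_
    gcongr
    exact hσ_diag b a _ _
  have hpay := cheating_payoff_le (m := fun a => m (Fin.castLE (by norm_num) a)) (t := t) hw
    (fun a => marginalDiag_nonneg hρI _) (marginalDiag_nonneg hρI 2)
    (fun b a => (hσ b a).re_apply_self_nonneg _) hm1
    (fun b => by simpa only [Fin.sum_univ_two] using hσ_sum b 2 2)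
  calc _ ≤ (1 / 2) * (∑ a : Fin 2, ∑ b : Fin 2, (w ^ 2 + if a = b then 1 else 0) *
        (√(2 / w) * √(m (Fin.castLE (by norm_num) a)) + √(1 - 2 / w) * √(t b a)) ^ 2) - w ^ 2 := by
        rw [hvw]
        gcongr with a _ b _
        exact hterm a b
    _ ≤ (1 / 2) * (2 * w ^ 2 + 1 + 1 / (4 * w)) - w ^ 2 := by gcongr
    _ = 1 / 2 + 1 / (8 * w) := by field_simp; ring

/-- A dishonest Alice's expected win in the two-party coin-flipping protocol with
penalty `v` is at most `1/2 + 1/(8√v)`: for any feasible solution of Alice's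
cheating SDP, the objective value (her expected payoff) obeys this bound.
Here `ρI, ρ b` live on `X ⊗ A ⊗ B` with `X = ℂ^d` Alice's private space, and
`σ b a` (for Bob's bit `b` and Alice's announced bit `a`) live on `A ⊗ B`. -/
theorem stmt_0 (v : ℝ) (hv : 4 ≤ v) (d : ℕ) (hd : 1 ≤ d)
    (ρI : Matrix (Fin d × Fin 3 × Fin 3) (Fin d × Fin 3 × Fin 3) ℂ)
    (ρ : Fin 2 → Matrix (Fin d × Fin 3 × Fin 3) (Fin d × Fin 3 × Fin 3) ℂ)
    (σ : Fin 2 → Fin 2 → Matrix (Fin 3 × Fin 3) (Fin 3 × Fin 3) ℂ)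
    (hρI : ρI.PosSemidef) (hρ : ∀ b, (ρ b).PosSemidef) (hσ : ∀ b a, (σ b a).PosSemidef)
    (htr : ρI.trace = 1)
    (hBfix : ∀ b : Fin 2, ∀ β β' : Fin 3,
      ∑ x : Fin d, ∑ α : Fin 3, ρI (x, α, β) (x, α, β') =
      ∑ x : Fin d, ∑ α : Fin 3, ρ b (x, α, β) (x, α, β'))
    (hmeas : ∀ b : Fin 2, ∀ α β α' β' : Fin 3,
      ∑ x : Fin d, ρ b (x, α, β) (x, α', β') =
      σ b 0 (α, β) (α', β') + σ b 1 (α, β) (α', β')) :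
    (1 / 2) * (∑ a : Fin 2, ∑ b : Fin 2,
      (v + if a = b then 1 else 0) *
        (star (psiPen (2 / Real.sqrt v) a) ⬝ᵥ
          (σ b a).mulVec (psiPen (2 / Real.sqrt v) a)).re) - v ≤
    1 / 2 + 1 / (8 * Real.sqrt v) :=
  stmt_0_general v hv d ρI ρ σ hρI hσ htr hBfix hmeas
end

section
/- Let δ ∈ [0,1] be real, and for a ∈ {0,1} let ρ_a be the 3×3 complex matrix ρ_a = δ·(e_a e_a†) + (1−δ)·(e_2 e_2†), where e_0, e_1, e_2 are the standard basis vectors of ℂ³ and e e† denotes the rank-one outer product. Then for all positive semidefinite 3×3 complex matrices M_0, M_1 with M_0 + M_1 = I (the identity), (1/2)·Re(tr(M_0 ρ_0)) + (1/2)·Re(tr(M_1 ρ_1)) ≤ 1/2 + δ/2. (This is the statement that dishonest Bob, holding the second register ρ_a, cannot guess a with probability more than 1/2 + δ/2; with δ = 2/√v this gives 1/2 + 1/√v.) -/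
/-!
Against `ρ_a = δ e_a e_a† + (1 - δ) e_2 e_2†` the effect `M_a` scores
`δ (M_a)_aa + (1 - δ) (M_a)_22`. Since `M_0 + M_1 = 1`, the two `(2,2)` entries add up to `1`,
and each `(M_a)_aa` is at most `1` because the diagonal of the other effect is nonnegative.
-/

open Matrix
open scoped ComplexOrder

/-- The standard basis vectors of ℂ³. -/
noncomputable def e3 (a : Fin 3) : Fin 3 → ℂ := fun i => if i = a then 1 else 0

theorem Matrix.trace_mul_vecMulVec_single {n R : Type*} [Fintype n] [DecidableEq n]
    [Semiring R] (M : Matrix n n R) (i : n) :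
    (M * vecMulVec (Pi.single i 1) (Pi.single i 1)).trace = M i i := by
  rw [mul_vecMulVec, trace_vecMulVec, dotProduct_single, mulVec_single_one, mul_one, col_apply]

theorem e3_eq_single (a : Fin 3) : e3 a = Pi.single a 1 := by
  ext i
  simp [e3, Pi.single_apply]

theorem re_trace_mul_mixture_outer_e3 (M : Matrix (Fin 3) (Fin 3) ℂ) (p q : ℝ) (a b : Fin 3) :
    (M * ((p : ℂ) • vecMulVec (e3 a) (star (e3 a)) +
        (q : ℂ) • vecMulVec (e3 b) (star (e3 b)))).trace.re = p * (M a a).re + q * (M b b).re := by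
  simp only [e3_eq_single, Pi.star_single, star_one, mul_add, Matrix.mul_smul, trace_add,
    trace_smul, trace_mul_vecMulVec_single, smul_eq_mul, Complex.add_re, Complex.re_ofReal_mul]

theorem re_apply_self_add_re_apply_self_of_add_eq_one {n : Type*} [DecidableEq n]
    {M N : Matrix n n ℂ} (hsum : M + N = 1) (i : n) : (M i i).re + (N i i).re = 1 := by
  simpa using congrArg Complex.re (congrFun (congrFun hsum i) i)

theorem Matrix.PosSemidef.re_apply_self_le_one_of_add_eq_one {n : Type*} [Fintype n]
    [DecidableEq n] {M N : Matrix n n ℂ} (hN : N.PosSemidef) (hsum : M + N = 1) (i : n) :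
    (M i i).re ≤ 1 := by
  linarith [re_apply_self_add_re_apply_self_of_add_eq_one hsum i,
    (Complex.le_def.mp (hN.diag_nonneg (i := i))).1, Complex.zero_re]

theorem stmt_1_general (δ : ℝ) (hδ0 : 0 ≤ δ)
    (M0 M1 : Matrix (Fin 3) (Fin 3) ℂ)
    (h0 : M0.PosSemidef) (h1 : M1.PosSemidef) (hsum : M0 + M1 = 1) :
    let outer : (Fin 3 → ℂ) → Matrix (Fin 3) (Fin 3) ℂ :=
      fun ψ => Matrix.vecMulVec ψ (star ψ)
    let ρ0 : Matrix (Fin 3) (Fin 3) ℂ :=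
      (δ : ℂ) • outer (e3 0) + ((1 - δ : ℝ) : ℂ) • outer (e3 2)
    let ρ1 : Matrix (Fin 3) (Fin 3) ℂ :=
      (δ : ℂ) • outer (e3 1) + ((1 - δ : ℝ) : ℂ) • outer (e3 2)
    (1 / 2) * ((M0 * ρ0).trace).re + (1 / 2) * ((M1 * ρ1).trace).re ≤ 1 / 2 + δ / 2 := by
  intro outer ρ0 ρ1
  simp only [ρ0, ρ1, outer, re_trace_mul_mixture_outer_e3]
  have hM0 : (M0 0 0).re ≤ 1 := h1.re_apply_self_le_one_of_add_eq_one hsum 0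
  have hM1 : (M1 1 1).re ≤ 1 := h0.re_apply_self_le_one_of_add_eq_one (add_comm M0 M1 ▸ hsum) 1
  have h22 : (M0 2 2).re + (M1 2 2).re = 1 := re_apply_self_add_re_apply_self_of_add_eq_one hsum 2
  linear_combination (1 / 2) * mul_le_mul_of_nonneg_left hM0 hδ0 +
    (1 / 2) * mul_le_mul_of_nonneg_left hM1 hδ0 + ((1 - δ) / 2) * h22

/-- No two-outcome POVM distinguishes `ρ_0` and `ρ_1` with probability
better than `1/2 + δ/2`. -/
theorem stmt_1 (δ : ℝ) (hδ0 : 0 ≤ δ) (hδ1 : δ ≤ 1)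
    (M0 M1 : Matrix (Fin 3) (Fin 3) ℂ)
    (h0 : M0.PosSemidef) (h1 : M1.PosSemidef) (hsum : M0 + M1 = 1) :
    let outer : (Fin 3 → ℂ) → Matrix (Fin 3) (Fin 3) ℂ :=
      fun ψ => Matrix.vecMulVec ψ (star ψ)
    let ρ0 : Matrix (Fin 3) (Fin 3) ℂ :=
      (δ : ℂ) • outer (e3 0) + ((1 - δ : ℝ) : ℂ) • outer (e3 2)
    let ρ1 : Matrix (Fin 3) (Fin 3) ℂ :=
      (δ : ℂ) • outer (e3 1) + ((1 - δ : ℝ) : ℂ) • outer (e3 2)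
    (1 / 2) * ((M0 * ρ0).trace).re + (1 / 2) * ((M1 * ρ1).trace).re ≤ 1 / 2 + δ / 2 :=
  stmt_1_general δ hδ0 M0 M1 h0 h1 hsum
end

section
/- Let δ ∈ [0,1], t ≥ 0, and m_0, m_1, m_2 ≥ 0 be reals satisfying m_0 ≥ t·δ, m_2 ≥ t·(1−δ), and m_0·m_2 ≥ t·(1−δ)·m_0 + t·δ·m_2. Let M = diag(m_0, m_1, m_2) be the 3×3 diagonal matrix and let ψ = √δ·(e_0 ⊗ e_0) + √(1−δ)·(e_2 ⊗ e_2) ∈ ℂ⁹ (indexed by Fin 3 × Fin 3). Then the 9×9 matrix (I₃ ⊗ M) − t·ψψ† is positive semidefinite, where I₃ is the 3×3 identity and ⊗ is the Kronecker product. -/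
open Matrix Kronecker
open scoped ComplexOrder

/-!
The matrix `1 ⊗ₖ M` is diagonal, with entry `m_j` at `(i, j)`, and `ψ` is supported on
`(0, 0)` and `(2, 2)`. So the quadratic form at `x` is `∑ m_j |x_ij|² - t |√δ x₀₀ + √(1-δ) x₂₂|²`,
and after the triangle inequality it suffices that the real quadratic form
`(m₀ - tδ) u² - 2t√(δ(1-δ)) u v + (m₂ - t(1-δ)) v²` is nonnegative: its diagonal coefficients are
nonnegative and its determinant is `m₀ m₂ - t(1-δ) m₀ - tδ m₂ ≥ 0`.
-/

theorem two_mul_mul_le_of_sq_le_mul {p q r : ℝ} (hp : 0 ≤ p) (hq : 0 ≤ q) (h : r ^ 2 ≤ p * q)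
    (u v : ℝ) : 2 * r * u * v ≤ p * u ^ 2 + q * v ^ 2 := by
  rcases hp.eq_or_lt with rfl | hp
  · obtain rfl : r = 0 := by nlinarith
    nlinarith [sq_nonneg v]
  · -- `p (p u² + q v² - 2 r u v) = (p u - r v)² + (p q - r²) v²`
    nlinarith [sq_nonneg (p * u - r * v), mul_nonneg (sub_nonneg.2 h) (sq_nonneg v)]

theorem Matrix.one_kronecker_diagonal {α l n : Type*} [MulZeroOneClass α] [DecidableEq l]
    [DecidableEq n] (b : n → α) :
    (1 : Matrix l l α) ⊗ₖ diagonal b = diagonal fun p => b p.2 := by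
  rw [← diagonal_one, diagonal_kronecker_diagonal]
  simp only [one_mul]

theorem Matrix.posSemidef_diagonal_sub_smul_vecMulVec {𝕜 ι : Type*} [RCLike 𝕜] [Fintype ι]
    [DecidableEq ι] (d : ι → ℝ) (t : ℝ) (ψ : ι → 𝕜)
    (h : ∀ x : ι → 𝕜, t * ‖star ψ ⬝ᵥ x‖ ^ 2 ≤ ∑ i, d i * ‖x i‖ ^ 2) :
    (diagonal (fun i => (d i : 𝕜)) - (t : 𝕜) • vecMulVec ψ (star ψ)).PosSemidef := by
  rw [posSemidef_iff_dotProduct_mulVec]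
  refine ⟨(isHermitian_diagonal_of_self_adjoint _ ?_).sub
    ((posSemidef_vecMulVec_self_star ψ).isHermitian.smul (RCLike.conj_ofReal t)), fun x => ?_⟩
  · exact funext fun i => RCLike.conj_ofReal (d i)
  have quadratic_form :
      star x ⬝ᵥ ((diagonal (fun i => (d i : 𝕜)) - (t : 𝕜) • vecMulVec ψ (star ψ)) *ᵥ x)
        = ((∑ i, d i * ‖x i‖ ^ 2 - t * ‖star ψ ⬝ᵥ x‖ ^ 2 : ℝ) : 𝕜) := by
    rw [sub_mulVec, dotProduct_sub, smul_mulVec, dotProduct_smul, vecMulVec_mulVec,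
      dotProduct_smul, star_dotProduct x ψ, op_smul_eq_mul, RCLike.star_def, RCLike.conj_mul]
    simp only [dotProduct, mulVec_diagonal, Pi.star_apply, RCLike.star_def,
      mul_left_comm _ (d _ : 𝕜), RCLike.conj_mul, smul_eq_mul]
    norm_cast
  rw [quadratic_form, RCLike.ofReal_nonneg, sub_nonneg]
  exact h x

section
variable {δ t m0 m2 : ℝ} (hδ0 : 0 ≤ δ) (hδ1 : δ ≤ 1) (c1 : m0 ≥ t * δ) (c2 : m2 ≥ t * (1 - δ))
    (c3 : m0 * m2 ≥ t * (1 - δ) * m0 + t * δ * m2)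
include hδ0 hδ1 c1 c2 c3

theorem mul_sq_sqrt_mul_add_sqrt_one_sub_mul_le (u v : ℝ) :
    t * (√δ * u + √(1 - δ) * v) ^ 2 ≤ m0 * u ^ 2 + m2 * v ^ 2 := by
  have hδ : √δ ^ 2 = δ := Real.sq_sqrt hδ0
  have hδ' : √(1 - δ) ^ 2 = 1 - δ := Real.sq_sqrt (by linarith)
  have hr : (t * (√δ * √(1 - δ))) ^ 2 ≤ (m0 - t * δ) * (m2 - t * (1 - δ)) := by
    rw [mul_pow, mul_pow, hδ, hδ']
    linarith
  have key := two_mul_mul_le_of_sq_le_mul (sub_nonneg.2 c1) (sub_nonneg.2 c2) hr u v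
  linear_combination key + t * u ^ 2 * hδ + t * v ^ 2 * hδ'

theorem mul_norm_sqrt_smul_add_sqrt_one_sub_smul_sq_le {E : Type*} [SeminormedAddCommGroup E]
    [NormedSpace ℝ E] (ht : 0 ≤ t) (u v : E) :
    t * ‖√δ • u + √(1 - δ) • v‖ ^ 2 ≤ m0 * ‖u‖ ^ 2 + m2 * ‖v‖ ^ 2 := by
  have triangle : ‖√δ • u + √(1 - δ) • v‖ ≤ √δ * ‖u‖ + √(1 - δ) * ‖v‖ := by
    refine (norm_add_le _ _).trans_eq ?_
    rw [norm_smul, norm_smul, Real.norm_of_nonneg (Real.sqrt_nonneg _),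
      Real.norm_of_nonneg (Real.sqrt_nonneg _)]
  calc t * ‖√δ • u + √(1 - δ) • v‖ ^ 2 ≤ t * (√δ * ‖u‖ + √(1 - δ) * ‖v‖) ^ 2 := by
        gcongr
    _ ≤ m0 * ‖u‖ ^ 2 + m2 * ‖v‖ ^ 2 :=
        mul_sq_sqrt_mul_add_sqrt_one_sub_mul_le hδ0 hδ1 c1 c2 c3 _ _
end

/-- Feasibility of the dual constraints `I₃ ⊗ M ⪰ t·|ψ⟩⟨ψ|` for a diagonal
matrix `M = diag(m₀, m₁, m₂)` and `ψ = √δ·e₀⊗e₀ + √(1-δ)·e₂⊗e₂`. -/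
theorem stmt_3 (δ t m0 m1 m2 : ℝ) (hδ0 : 0 ≤ δ) (hδ1 : δ ≤ 1) (ht : 0 ≤ t)
    (h0 : 0 ≤ m0) (h1 : 0 ≤ m1) (h2 : 0 ≤ m2)
    (c1 : m0 ≥ t * δ) (c2 : m2 ≥ t * (1 - δ))
    (c3 : m0 * m2 ≥ t * (1 - δ) * m0 + t * δ * m2) :
    let M : Matrix (Fin 3) (Fin 3) ℂ := Matrix.diagonal ![(m0 : ℂ), (m1 : ℂ), (m2 : ℂ)]
    let ψ : Fin 3 × Fin 3 → ℂ := fun p =>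
      if p.1 = 0 ∧ p.2 = 0 then (Real.sqrt δ : ℂ)
      else if p.1 = 2 ∧ p.2 = 2 then (Real.sqrt (1 - δ) : ℂ) else 0
    ((1 : Matrix (Fin 3) (Fin 3) ℂ) ⊗ₖ M -
      (t : ℂ) • Matrix.vecMulVec ψ (star ψ)).PosSemidef := by
  intro M ψ
  have hM : M = diagonal fun j => ((![m0, m1, m2] j : ℝ) : ℂ) := by
    unfold M
    congr 1
    funext j
    fin_cases j <;> rfl
  rw [hM, one_kronecker_diagonal]
  have hψx (x : Fin 3 × Fin 3 → ℂ) : star ψ ⬝ᵥ x = √δ • x (0, 0) + √(1 - δ) • x (2, 2) := by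
    simp [ψ, dotProduct, Fintype.sum_prod_type, Fin.sum_univ_three, apply_ite (star : ℂ → ℂ)]
  have hm (j : Fin 3) : 0 ≤ ![m0, m1, m2] j := by
    fin_cases j <;> assumption
  have bound (x : Fin 3 × Fin 3 → ℂ) :
      t * ‖star ψ ⬝ᵥ x‖ ^ 2 ≤ ∑ p, ![m0, m1, m2] p.2 * ‖x p‖ ^ 2 :=
    calc t * ‖star ψ ⬝ᵥ x‖ ^ 2 ≤ m0 * ‖x (0, 0)‖ ^ 2 + m2 * ‖x (2, 2)‖ ^ 2 := by
          rw [hψx]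
          exact mul_norm_sqrt_smul_add_sqrt_one_sub_smul_sq_le hδ0 hδ1 c1 c2 c3 ht _ _
      _ = ∑ p ∈ {(0, 0), (2, 2)}, ![m0, m1, m2] p.2 * ‖x p‖ ^ 2 := by simp
      _ ≤ ∑ p, ![m0, m1, m2] p.2 * ‖x p‖ ^ 2 :=
          Finset.sum_le_sum_of_subset_of_nonneg (Finset.subset_univ _)
            fun p _ _ => mul_nonneg (hm p.2) (sq_nonneg _)
  exact posSemidef_diagonal_sub_smul_vecMulVec (𝕜 := ℂ) _ t ψ bound
end

section
/- Let v ≥ 4 be real and set δ = 2/√v, s = √(4 − 4δ + (δ + 2δv)²), m_0 = (1/2)·(1+v)·(2 − δ(1+2v) + s), and m_1 = (1/2)·v·(2 + δ + 2δv − s). Then m_0 + m_1 = 2v + (−1 + √v − 2v + √(1 − 2√v + 5v + 4v²))/√v, and m_0 + m_1 ≤ 2v + 1 + 1/(4√v); consequently (m_0 + m_1)/2 − v ≤ 1/2 + 1/(8√v). -/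
/-- Value of the explicit dual solution for the coin-flipping-with-penalty SDP. -/
theorem stmt_5 (v : ℝ) (hv : 4 ≤ v) :
    let δ : ℝ := 2 / Real.sqrt v
    let s : ℝ := Real.sqrt (4 - 4 * δ + (δ + 2 * δ * v) ^ 2)
    let m0 : ℝ := (1 / 2) * (1 + v) * (2 - δ * (1 + 2 * v) + s)
    let m1 : ℝ := (1 / 2) * v * (2 + δ + 2 * δ * v - s)
    m0 + m1 = 2 * v + (-1 + Real.sqrt v - 2 * v +
      Real.sqrt (1 - 2 * Real.sqrt v + 5 * v + 4 * v ^ 2)) / Real.sqrt v ∧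
    m0 + m1 ≤ 2 * v + 1 + 1 / (4 * Real.sqrt v) ∧
    (m0 + m1) / 2 - v ≤ 1 / 2 + 1 / (8 * Real.sqrt v) := by
  intro δ s m0 m1
  set r := Real.sqrt v with hr
  have hr2 : (2 : ℝ) ≤ r := by
    have : Real.sqrt 4 ≤ r := Real.sqrt_le_sqrt hv
    rwa [show (4:ℝ) = 2^2 by norm_num, Real.sqrt_sq (by norm_num : (0:ℝ) ≤ 2)] at this
  have hrpos : (0 : ℝ) < r := by linarith
  have hrv : r ^ 2 = v := Real.sq_sqrt (by linarith)
  have hQ : 0 ≤ 1 - 2 * r + 5 * v + 4 * v ^ 2 := by nlinarith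
  have hδ : δ = 2 / r := rfl
  have hs : s = 2 * Real.sqrt (1 - 2 * r + 5 * v + 4 * v ^ 2) / r := by
    show Real.sqrt (4 - 4 * δ + (δ + 2 * δ * v) ^ 2) = _
    rw [show 4 - 4 * δ + (δ + 2 * δ * v) ^ 2
        = (2 / r) ^ 2 * (1 - 2 * r + 5 * v + 4 * v ^ 2) by
      rw [hδ, ← hrv]; field_simp; ring]
    rw [Real.sqrt_mul (sq_nonneg _), Real.sqrt_sq (by positivity)]
    ring
  have hsum : m0 + m1 = 2 * v + (-1 + r - 2 * v +
      Real.sqrt (1 - 2 * r + 5 * v + 4 * v ^ 2)) / r := by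
    show (1 / 2) * (1 + v) * (2 - δ * (1 + 2 * v) + s)
        + (1 / 2) * v * (2 + δ + 2 * δ * v - s) = _
    rw [hs, hδ]
    field_simp
    ring
  have hsq : Real.sqrt (1 - 2 * r + 5 * v + 4 * v ^ 2) ≤ 2 * v + 5 / 4 := by
    rw [show (2 * v + 5 / 4 : ℝ) = Real.sqrt ((2 * v + 5 / 4) ^ 2) from
      (Real.sqrt_sq (by positivity)).symm]
    apply Real.sqrt_le_sqrt
    nlinarith
  have hbound : m0 + m1 ≤ 2 * v + 1 + 1 / (4 * r) := by
    rw [hsum]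
    have h1 : (-1 + r - 2 * v + Real.sqrt (1 - 2 * r + 5 * v + 4 * v ^ 2)) / r
        ≤ (r + 1 / 4) / r := by
      rw [div_le_div_iff_of_pos_right hrpos]
      linarith
    have h2 : (r + 1 / 4) / r = 1 + 1 / (4 * r) := by field_simp
    linarith
  refine ⟨hsum, hbound, ?_⟩
  have h8 : 2 * (1 / (8 * r)) = 1 / (4 * r) := by field_simp; ring
  linarith
end

section
/- Fix reals v > 0 and δ ∈ [0,1], and for a ∈ {0,1} let ψ_a = √δ·(e_a ⊗ e_a) + √(1−δ)·(e_2 ⊗ e_2) ∈ ℂ⁹ (indexed by Fin 3 × Fin 3). Let d ≥ 1 and suppose ρ_init, ρ_0, ρ_1 are positive semidefinite complex matrices indexed by (Fin d × Fin 3 × Fin 3) and ρ_{00}, ρ_{01}, ρ_{10}, ρ_{11} are positive semidefinite complex matrices indexed by (Fin 3 × Fin 3), satisfying: (i) tr(ρ_init) = 1; (ii) for each b ∈ {0,1} and all β, β' ∈ Fin 3, Σ_{x,α} ρ_init((x,α,β),(x,α,β')) = Σ_{x,α} ρ_b((x,α,β),(x,α,β')); (iii) for each b ∈ {0,1} the partial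 trace over Fin d of ρ_b equals ρ_{b0} + ρ_{b1}. Suppose further λ ∈ ℝ, M_0, M_1 are Hermitian 3×3 matrices and L_0, L_1 are Hermitian 9×9 matrices (indexed by Fin 3 × Fin 3) such that M_0 + M_1 ⪯ λ·I₃, L_b ⪯ I₃ ⊗ M_b for b ∈ {0,1}, and (v + [a=b])·ψ_a ψ_a† ⪯ L_b for all a, b ∈ {0,1}. Then Σ_{a,b ∈ {0,1}} (v + [a=b])·Re⟨ψ_a, ρ_{ba} ψ_a⟩ ≤ λ. (Weak duality: any feasible dual solution upper-bounds any feasible primal value of Alice's cheating SDP.) -/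
/-!
Each dual constraint is a Loewner inequality, and pairing it with a positive semidefinite primal
variable preserves it under the trace, since `tr (X B) ≥ 0` for `X, B ⪰ 0`. So each term
`(v + [a = b]) ⟨ψ_a, σ_ba ψ_a⟩` is at most `tr (L_b σ_ba) ≤ tr ((I ⊗ M_b) σ_ba)`. Summing over `a`,
the partial-trace constraints say that `σ_b0 + σ_b1` and `ρ_init` have the same reduced state `τ`
on the last factor, so the bound becomes `tr ((M_0 + M_1) τ) ≤ λ tr τ = λ`.
-/

open Matrix Kronecker
open scoped ComplexOrder

namespace Matrix

variable {m n R : Type*} [Fintype m]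

def partialTrace [AddCommMonoid R] (A : Matrix (m × n) (m × n) R) : Matrix n n R :=
  of fun i j => ∑ x, A (x, i) (x, j)

@[simp]
theorem partialTrace_apply [AddCommMonoid R] (A : Matrix (m × n) (m × n) R) (i j : n) :
    partialTrace A i j = ∑ x, A (x, i) (x, j) := rfl

theorem trace_partialTrace [Fintype n] [AddCommMonoid R] (A : Matrix (m × n) (m × n) R) :
    (partialTrace A).trace = A.trace := by
  simp only [trace, diag, partialTrace_apply, Fintype.sum_prod_type]
  exact Finset.sum_comm

theorem trace_one_kronecker_mul [Fintype n] [DecidableEq m] [Semiring R] (M : Matrix n n R)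
    (A : Matrix (m × n) (m × n) R) :
    ((1 ⊗ₖ M) * A).trace = (M * partialTrace A).trace := by
  simp only [trace, diag, mul_apply, Fintype.sum_prod_type, kroneckerMap_apply, one_apply,
    ite_mul, one_mul, zero_mul, partialTrace_apply, Finset.mul_sum]
  simp only [Finset.sum_ite_eq, Finset.mem_univ, if_true,
    Finset.sum_comm (γ := m) (t := Finset.univ)]

theorem PosSemidef.partialTrace [Ring R] [PartialOrder R] [StarRing R] [AddLeftMono R]
    {A : Matrix (m × n) (m × n) R} (hA : A.PosSemidef) : (partialTrace A).PosSemidef := by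
  have : Matrix.partialTrace A = ∑ x, A.submatrix (Prod.mk x) (Prod.mk x) := by
    ext i j; simp [Matrix.sum_apply]
  rw [this]
  exact posSemidef_sum _ fun x _ => hA.submatrix _

theorem trace_vecMulVec_star_mul [Fintype n] [CommSemiring R] [StarRing R] (ψ : n → R)
    (B : Matrix n n R) :
    (vecMulVec ψ (star ψ) * B).trace = star ψ ⬝ᵥ B *ᵥ ψ := by
  rw [vecMulVec_mul, trace_vecMulVec, dotProduct_comm, dotProduct_mulVec]

variable [Fintype n] [DecidableEq n] {𝕜 : Type*} [RCLike 𝕜]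

theorem PosSemidef.trace_mul_nonneg {A B : Matrix n n 𝕜} (hA : A.PosSemidef)
    (hB : B.PosSemidef) : 0 ≤ (A * B).trace := by
  open scoped MatrixOrder in
  obtain ⟨C, rfl⟩ := CStarAlgebra.nonneg_iff_eq_star_mul_self.mp hB.nonneg
  rw [← Matrix.mul_assoc, Matrix.trace_mul_cycle]
  exact (hA.mul_mul_conjTranspose_same C).trace_nonneg

theorem trace_mul_le_trace_mul {X Y B : Matrix n n 𝕜} (h : (Y - X).PosSemidef)
    (hB : B.PosSemidef) : (X * B).trace ≤ (Y * B).trace := by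
  simpa [sub_mul, trace_sub] using h.trace_mul_nonneg hB

theorem mul_dotProduct_le_trace_mul {ψ : n → 𝕜} {c : 𝕜} {L B : Matrix n n 𝕜}
    (h : (L - c • vecMulVec ψ (star ψ)).PosSemidef) (hB : B.PosSemidef) :
    c * (star ψ ⬝ᵥ B *ᵥ ψ) ≤ (L * B).trace := by
  simpa [smul_mul, trace_vecMulVec_star_mul] using trace_mul_le_trace_mul h hB

theorem trace_mul_le_of_posSemidef_smul_one_sub {c : 𝕜} {M B : Matrix n n 𝕜}
    (h : (c • 1 - M).PosSemidef) (hB : B.PosSemidef) : (M * B).trace ≤ c * B.trace := by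
  simpa [smul_mul] using trace_mul_le_trace_mul h hB

end Matrix

theorem stmt_6_general (v δ : ℝ) (d : ℕ)
    (ρI : Matrix (Fin d × Fin 3 × Fin 3) (Fin d × Fin 3 × Fin 3) ℂ)
    (ρ : Fin 2 → Matrix (Fin d × Fin 3 × Fin 3) (Fin d × Fin 3 × Fin 3) ℂ)
    (σ : Fin 2 → Fin 2 → Matrix (Fin 3 × Fin 3) (Fin 3 × Fin 3) ℂ)
    (hρI : ρI.PosSemidef) (hσ : ∀ b a, (σ b a).PosSemidef)
    (htr : ρI.trace = 1)
    (hBfix : ∀ b : Fin 2, ∀ β β' : Fin 3,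
      ∑ x : Fin d, ∑ α : Fin 3, ρI (x, α, β) (x, α, β') =
      ∑ x : Fin d, ∑ α : Fin 3, ρ b (x, α, β) (x, α, β'))
    (hmeas : ∀ b : Fin 2, ∀ α β α' β' : Fin 3,
      ∑ x : Fin d, ρ b (x, α, β) (x, α', β') =
      σ b 0 (α, β) (α', β') + σ b 1 (α, β) (α', β'))
    (lam : ℝ) (M : Fin 2 → Matrix (Fin 3) (Fin 3) ℂ)
    (L : Fin 2 → Matrix (Fin 3 × Fin 3) (Fin 3 × Fin 3) ℂ)
    (hMle : ((lam : ℂ) • (1 : Matrix (Fin 3) (Fin 3) ℂ) - (M 0 + M 1)).PosSemidef)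
    (hLle : ∀ b : Fin 2, ((1 : Matrix (Fin 3) (Fin 3) ℂ) ⊗ₖ M b - L b).PosSemidef)
    (hψle : ∀ a b : Fin 2,
      (L b - ((v + if a = b then 1 else 0 : ℝ) : ℂ) •
        Matrix.vecMulVec (psiPen δ a) (star (psiPen δ a))).PosSemidef) :
    ∑ a : Fin 2, ∑ b : Fin 2,
      (v + if a = b then 1 else 0) *
        (star (psiPen δ a) ⬝ᵥ (σ b a).mulVec (psiPen δ a)).re ≤ lam := by
  set τ := partialTrace (partialTrace ρI)
  have hτ : τ.PosSemidef := hρI.partialTrace.partialTrace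
  have hτ_trace : τ.trace = 1 := by rw [trace_partialTrace, trace_partialTrace, htr]
  have hσ_sum : ∀ b, partialTrace (σ b 0 + σ b 1) = τ := by
    intro b
    ext β β'
    simp only [partialTrace_apply, Matrix.add_apply, ← hmeas, τ]
    rw [Finset.sum_comm, ← hBfix b]
    exact Finset.sum_comm
  have hterm : ∀ a b : Fin 2,
      ((v + if a = b then 1 else 0 : ℝ) : ℂ) * (star (psiPen δ a) ⬝ᵥ σ b a *ᵥ psiPen δ a) ≤
        ((1 ⊗ₖ M b) * σ b a).trace := fun a b =>
    (mul_dotProduct_le_trace_mul (hψle a b) (hσ b a)).trans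
      (trace_mul_le_trace_mul (hLle b) (hσ b a))
  have hvalue : ∑ a : Fin 2, ∑ b : Fin 2,
      ((v + if a = b then 1 else 0 : ℝ) : ℂ) * (star (psiPen δ a) ⬝ᵥ σ b a *ᵥ psiPen δ a) ≤
        (lam : ℂ) :=
    calc _ ≤ ∑ a : Fin 2, ∑ b : Fin 2, ((1 ⊗ₖ M b) * σ b a).trace :=
          by gcongr with a _ b _; exact hterm a b
      _ = ∑ b : Fin 2, (M b * τ).trace := by
          rw [Finset.sum_comm]
          refine Finset.sum_congr rfl fun b _ => ?_
          rw [Fin.sum_univ_two, ← trace_add, ← mul_add, trace_one_kronecker_mul, hσ_sum]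
      _ = ((M 0 + M 1) * τ).trace := by rw [Fin.sum_univ_two, add_mul, trace_add]
      _ ≤ lam * τ.trace := trace_mul_le_of_posSemidef_smul_one_sub hMle hτ
      _ = lam := by rw [hτ_trace, mul_one]
  simpa only [Complex.re_sum, Complex.re_ofReal_mul, Complex.ofReal_re] using
    (Complex.le_def.mp hvalue).1

/-- Weak duality for Alice's cheating SDP in the two-party coin-flipping protocol
with penalty `v`: any feasible dual solution `(λ, M₀, M₁, L₀, L₁)` upper-bounds
the value of any feasible primal (cheating) solution. -/
theorem stmt_6 (v δ : ℝ) (hv : 0 < v) (hδ0 : 0 ≤ δ) (hδ1 : δ ≤ 1)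
    (d : ℕ) (hd : 1 ≤ d)
    (ρI : Matrix (Fin d × Fin 3 × Fin 3) (Fin d × Fin 3 × Fin 3) ℂ)
    (ρ : Fin 2 → Matrix (Fin d × Fin 3 × Fin 3) (Fin d × Fin 3 × Fin 3) ℂ)
    (σ : Fin 2 → Fin 2 → Matrix (Fin 3 × Fin 3) (Fin 3 × Fin 3) ℂ)
    (hρI : ρI.PosSemidef) (hρ : ∀ b, (ρ b).PosSemidef) (hσ : ∀ b a, (σ b a).PosSemidef)
    (htr : ρI.trace = 1)
    (hBfix : ∀ b : Fin 2, ∀ β β' : Fin 3,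
      ∑ x : Fin d, ∑ α : Fin 3, ρI (x, α, β) (x, α, β') =
      ∑ x : Fin d, ∑ α : Fin 3, ρ b (x, α, β) (x, α, β'))
    (hmeas : ∀ b : Fin 2, ∀ α β α' β' : Fin 3,
      ∑ x : Fin d, ρ b (x, α, β) (x, α', β') =
      σ b 0 (α, β) (α', β') + σ b 1 (α, β) (α', β'))
    (lam : ℝ) (M : Fin 2 → Matrix (Fin 3) (Fin 3) ℂ)
    (L : Fin 2 → Matrix (Fin 3 × Fin 3) (Fin 3 × Fin 3) ℂ)
    (hMherm : ∀ b, (M b).IsHermitian) (hLherm : ∀ b, (L b).IsHermitian)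
    (hMle : ((lam : ℂ) • (1 : Matrix (Fin 3) (Fin 3) ℂ) - (M 0 + M 1)).PosSemidef)
    (hLle : ∀ b : Fin 2, ((1 : Matrix (Fin 3) (Fin 3) ℂ) ⊗ₖ M b - L b).PosSemidef)
    (hψle : ∀ a b : Fin 2,
      (L b - ((v + if a = b then 1 else 0 : ℝ) : ℂ) •
        Matrix.vecMulVec (psiPen δ a) (star (psiPen δ a))).PosSemidef) :
    ∑ a : Fin 2, ∑ b : Fin 2,
      (v + if a = b then 1 else 0) *
        (star (psiPen δ a) ⬝ᵥ (σ b a).mulVec (psiPen δ a)).re ≤ lam :=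
  stmt_6_general v δ d ρI ρ σ hρI hσ htr hBfix hmeas lam M L hMle hLle hψle
end

section
/- Let d_A, d_M, d_B ≥ 1 be natural numbers. Let Z_A and Z_A' be positive semidefinite complex matrices of size d_A × d_A, let Z_B be a positive semidefinite complex matrix of size d_B × d_B, and let U be a unitary complex matrix indexed by Fin d_A × Fin d_M such that U†·(Z_A' ⊗ I_M)·U ⪯ Z_A ⊗ I_M, where I_M is the d_M × d_M identity. Then for every vector ψ indexed by Fin d_A × Fin d_M × Fin d_B, Re⟨ψ, (Z_A ⊗ I_M ⊗ Z_B)·ψ⟩ ≥ Re⟨φ, (Z_A' ⊗ I_M ⊗ Z_B)·φ⟩, where φ = (U ⊗ I_B)·ψ and I_B is the d_B × d_B identity. (This is the monotonicity step F_j ≥ F_{j+1} in Kitaev's lower-bound argument for a round in which Alice moves; the analogous statement with the roles of the first and third tensor factors exchanged covers Bob's moves.) -/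
open Matrix Kronecker
open scoped ComplexOrder

/-- The triple Kronecker product `A ⊗ B ⊗ C` on `ℂ^{d_A} ⊗ ℂ^{d_M} ⊗ ℂ^{d_B}`. -/
noncomputable def tk {dA dM dB : ℕ} (A : Matrix (Fin dA) (Fin dA) ℂ)
    (B : Matrix (Fin dM) (Fin dM) ℂ) (C : Matrix (Fin dB) (Fin dB) ℂ) :
    Matrix (Fin dA × Fin dM × Fin dB) (Fin dA × Fin dM × Fin dB) ℂ :=
  fun p q => A p.1 q.1 * B p.2.1 q.2.1 * C p.2.2 q.2.2

/-- The extension `U ⊗ I_B` of a matrix `U` on `ℂ^{d_A} ⊗ ℂ^{d_M}` acting as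
identity on `ℂ^{d_B}`. -/
noncomputable def extA {dA dM : ℕ} (dB : ℕ)
    (U : Matrix (Fin dA × Fin dM) (Fin dA × Fin dM) ℂ) :
    Matrix (Fin dA × Fin dM × Fin dB) (Fin dA × Fin dM × Fin dB) ℂ :=
  fun p q => if p.2.2 = q.2.2 then U (p.1, p.2.1) (q.1, q.2.1) else 0

/-!
Conjugating by `U ⊗ I_B` turns `Z_A' ⊗ I_M ⊗ Z_B` into `(U† (Z_A' ⊗ I_M) U) ⊗ Z_B`, so the
difference of the two quadratic forms is the quadratic form of `(Z_A ⊗ I_M - U† (Z_A' ⊗ I_M) U) ⊗ Z_B`,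
a Kronecker product of positive semidefinite matrices.
-/

namespace Matrix

theorem sub_kronecker {α l m n p : Type*} [NonUnitalNonAssocRing α] (A₁ A₂ : Matrix l m α)
    (B : Matrix n p α) : (A₁ - A₂) ⊗ₖ B = A₁ ⊗ₖ B - A₂ ⊗ₖ B := by
  ext
  simp [sub_mul]

variable {𝕜 ι κ : Type*} [RCLike 𝕜] [Fintype ι] [Fintype κ]

theorem re_dotProduct_mulVec_conj_le {A B X : Matrix ι ι 𝕜}
    (h : (A - Xᴴ * B * X).PosSemidef) (ψ : ι → 𝕜) :
    RCLike.re (star (X *ᵥ ψ) ⬝ᵥ B *ᵥ (X *ᵥ ψ)) ≤ RCLike.re (star ψ ⬝ᵥ A *ᵥ ψ) := by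
  have hnonneg := h.re_dotProduct_nonneg ψ
  rw [sub_mulVec, dotProduct_sub, map_sub, sub_nonneg] at hnonneg
  simpa only [star_mulVec, dotProduct_mulVec, vecMul_vecMul, Matrix.mul_assoc] using hnonneg

theorem conjTranspose_kronecker_one_mul_kronecker_mul [DecidableEq κ] (X B : Matrix ι ι 𝕜)
    (C : Matrix κ κ 𝕜) :
    (X ⊗ₖ (1 : Matrix κ κ 𝕜))ᴴ * (B ⊗ₖ C) * (X ⊗ₖ 1) = (Xᴴ * B * X) ⊗ₖ C := by
  rw [conjTranspose_kronecker, conjTranspose_one, ← mul_kronecker_mul, ← mul_kronecker_mul,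
    Matrix.one_mul, Matrix.mul_one]

theorem PosSemidef.sub_conj_kronecker [DecidableEq κ] {A B X : Matrix ι ι 𝕜} {C : Matrix κ κ 𝕜}
    (h : (A - Xᴴ * B * X).PosSemidef) (hC : C.PosSemidef) :
    (A ⊗ₖ C - (X ⊗ₖ 1)ᴴ * (B ⊗ₖ C) * (X ⊗ₖ 1)).PosSemidef := by
  rw [conjTranspose_kronecker_one_mul_kronecker_mul, ← sub_kronecker]
  exact h.kronecker hC

end Matrix

section Reindex

variable {dA dM dB : ℕ}

theorem tk_eq_submatrix (A : Matrix (Fin dA) (Fin dA) ℂ) (B : Matrix (Fin dM) (Fin dM) ℂ)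
    (C : Matrix (Fin dB) (Fin dB) ℂ) :
    tk A B C = ((A ⊗ₖ B) ⊗ₖ C).submatrix (Equiv.prodAssoc _ _ _).symm
      (Equiv.prodAssoc _ _ _).symm := by
  ext
  simp [tk]

theorem extA_eq_submatrix (U : Matrix (Fin dA × Fin dM) (Fin dA × Fin dM) ℂ) :
    extA dB U = (U ⊗ₖ (1 : Matrix (Fin dB) (Fin dB) ℂ)).submatrix (Equiv.prodAssoc _ _ _).symm
      (Equiv.prodAssoc _ _ _).symm := by
  ext p q
  by_cases h : p.2.2 = q.2.2 <;> simp [extA, one_apply, h]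

end Reindex

theorem stmt_7_general (dA dM dB : ℕ)
    (ZA ZA' : Matrix (Fin dA) (Fin dA) ℂ) (ZB : Matrix (Fin dB) (Fin dB) ℂ)
    (hZB : ZB.PosSemidef)
    (U : Matrix (Fin dA × Fin dM) (Fin dA × Fin dM) ℂ)
    (hstep : (ZA ⊗ₖ (1 : Matrix (Fin dM) (Fin dM) ℂ) -
      Uᴴ * (ZA' ⊗ₖ (1 : Matrix (Fin dM) (Fin dM) ℂ)) * U).PosSemidef)
    (ψ : Fin dA × Fin dM × Fin dB → ℂ) :
    (star ψ ⬝ᵥ (tk ZA 1 ZB).mulVec ψ).re ≥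
    (star ((extA dB U).mulVec ψ) ⬝ᵥ
      (tk ZA' 1 ZB).mulVec ((extA dB U).mulVec ψ)).re := by
  have hdiff : (tk ZA 1 ZB - (extA dB U)ᴴ * tk ZA' 1 ZB * extA dB U).PosSemidef := by
    rw [tk_eq_submatrix, tk_eq_submatrix, extA_eq_submatrix, conjTranspose_submatrix,
      submatrix_mul_equiv, submatrix_mul_equiv]
    exact (hstep.sub_conj_kronecker hZB).submatrix _
  exact re_dotProduct_mulVec_conj_le hdiff ψ

/-- Monotonicity step in Kitaev's lower bound (a round in which Alice moves):
if `U†·(Z_A' ⊗ I_M)·U ⪯ Z_A ⊗ I_M`, then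
`Re⟨ψ, (Z_A ⊗ I_M ⊗ Z_B)ψ⟩ ≥ Re⟨(U ⊗ I_B)ψ, (Z_A' ⊗ I_M ⊗ Z_B)(U ⊗ I_B)ψ⟩`. -/
theorem stmt_7 (dA dM dB : ℕ) (hdA : 1 ≤ dA) (hdM : 1 ≤ dM) (hdB : 1 ≤ dB)
    (ZA ZA' : Matrix (Fin dA) (Fin dA) ℂ) (ZB : Matrix (Fin dB) (Fin dB) ℂ)
    (hZA : ZA.PosSemidef) (hZA' : ZA'.PosSemidef) (hZB : ZB.PosSemidef)
    (U : Matrix (Fin dA × Fin dM) (Fin dA × Fin dM) ℂ)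
    (hU : U ∈ Matrix.unitaryGroup (Fin dA × Fin dM) ℂ)
    (hstep : (ZA ⊗ₖ (1 : Matrix (Fin dM) (Fin dM) ℂ) -
      Uᴴ * (ZA' ⊗ₖ (1 : Matrix (Fin dM) (Fin dM) ℂ)) * U).PosSemidef)
    (ψ : Fin dA × Fin dM × Fin dB → ℂ) :
    (star ψ ⬝ᵥ (tk ZA 1 ZB).mulVec ψ).re ≥
    (star ((extA dB U).mulVec ψ) ⬝ᵥ
      (tk ZA' 1 ZB).mulVec ((extA dB U).mulVec ψ)).re :=
  stmt_7_general dA dM dB ZA ZA' ZB hZB U hstep ψ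
end

section
/- Let k ≥ 1, let d : Fin k → ℕ with d i ≥ 1 for all i, and let m ≥ 1. Write H for the index type ((i : Fin k) → Fin (d i)) × Fin m. Fix t : Fin k and a unitary complex matrix V indexed by Fin (d t) × Fin m, and define its extension Ṽ, a matrix indexed by H, by Ṽ((a,μ),(a',μ')) = V((a t, μ),(a' t, μ')) if a i = a' i for all i ≠ t, and 0 otherwise. For each i let Z i be a positive semidefinite matrix of size (d i) × (d i), and let Z' be a positive semidefinite matrix of size (d t) × (d t) such that V†·(Z' ⊗ I_m)·V ⪯ (Z t) ⊗ I_m. For a family (W i) of matrices with W i of size (d i) × (d i), let T(W) be the matrix indexed by H given by T(W)((a,μ),(a',μ')) = Π_{i} (W i)(a i, a' i) if μ = μ', and 0 otherwise. Then for every vector ψ indexed by H, Re⟨ψ, T(Z)·ψ⟩ ≥ Re⟨Ṽψ, T(Z'')·(Ṽψ)⟩, where Z'' is the family with Z'' t = Z' and Z'' i = Z i for i ≠ t. (Monotonicity step F_j ≥ F_{j+1} in the multiparty extension of Kitaev's lower bound.) -/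
open Matrix Kronecker
open scoped ComplexOrder

/-- `(⊗_i W i) ⊗ I_m` : the operator on the joint space of `k` parties (party
`i` having space `ℂ^{d i}`) and an `m`-dimensional message space, acting as
`W i` on party `i` and as identity on the message space. -/
noncomputable def Tfam {k : ℕ} {d : Fin k → ℕ} (m : ℕ)
    (W : ∀ i, Matrix (Fin (d i)) (Fin (d i)) ℂ) :
    Matrix (((i : Fin k) → Fin (d i)) × Fin m) (((i : Fin k) → Fin (d i)) × Fin m) ℂ :=
  fun p q => if p.2 = q.2 then ∏ i, W i (p.1 i) (q.1 i) else 0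

/-- The extension of a matrix `V` acting on party `t`'s space and the message
space to the joint space, acting as identity on all other parties. -/
noncomputable def extParty {k : ℕ} {d : Fin k → ℕ} {m : ℕ} (t : Fin k)
    (V : Matrix (Fin (d t) × Fin m) (Fin (d t) × Fin m) ℂ) :
    Matrix (((i : Fin k) → Fin (d i)) × Fin m) (((i : Fin k) → Fin (d i)) × Fin m) ℂ :=
  fun p q => if ∀ i, i ≠ t → p.1 i = q.1 i then V (p.1 t, p.2) (q.1 t, q.2) else 0

/-!
Split the joint index as (other parties) × (party `t`, message). Then `T(W)` becomes
`A_W ⊗ (W t ⊗ I_m)`, where `A_W` is the entrywise product of the `W j` for `j ≠ t`, and `Ṽ`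
becomes `I ⊗ V`. As `Z''` agrees with `Z` off `t`, both sides are quadratic forms in the same
reindexed vector, and their difference is the form of `A_Z ⊗ (Z t ⊗ I_m - V†(Z' ⊗ I_m)V)`.
This is positive semidefinite: `A_Z` is by the Schur product theorem, and Kronecker products of
positive semidefinite matrices are positive semidefinite.
-/

namespace Matrix

variable {𝕜 : Type*} [RCLike 𝕜]

theorem kronecker_sub {α : Type*} [NonUnitalNonAssocRing α] {l m n p : Type*}
    (A : Matrix l m α) (B₁ B₂ : Matrix n p α) : A ⊗ₖ (B₁ - B₂) = A ⊗ₖ B₁ - A ⊗ₖ B₂ := by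
  ext; simp [mul_sub]

theorem posSemidef_of_forall_prod_apply {n ι : Type*} [Fintype n] [Fintype ι]
    (f : ι → Matrix n n 𝕜) (hf : ∀ a, (f a).PosSemidef) :
    (of fun i j => ∏ a, f a i j).PosSemidef := by
  classical
  suffices ∀ s : Finset ι, (of fun i j => ∏ a ∈ s, f a i j).PosSemidef from this .univ
  intro s
  induction s using Finset.induction with
  | empty => simpa [vecMulVec] using posSemidef_vecMulVec_self_star (fun _ : n => (1 : 𝕜))
  | insert a s ha ih =>
    convert (hf a).hadamard ih using 1
    ext; simp [Finset.prod_insert ha]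

theorem star_dotProduct_submatrix_mulVec_equiv {α β : Type*} [Fintype α] [Fintype β]
    (N : Matrix β β 𝕜) (e : α ≃ β) (x : α → 𝕜) :
    star x ⬝ᵥ N.submatrix e e *ᵥ x = star (x ∘ e.symm) ⬝ᵥ N *ᵥ (x ∘ e.symm) := by
  rw [submatrix_mulVec_equiv, ← comp_equiv_symm_dotProduct]
  rfl

theorem star_mulVec_dotProduct_mulVec_mulVec {α : Type*} [Fintype α] (M N : Matrix α α 𝕜)
    (x : α → 𝕜) : star (M *ᵥ x) ⬝ᵥ N *ᵥ (M *ᵥ x) = star x ⬝ᵥ (Mᴴ * N * M) *ᵥ x := by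
  simp [star_mulVec, mulVec_mulVec, dotProduct_mulVec, vecMul_vecMul, Matrix.mul_assoc]

theorem re_dotProduct_mulVec_le_of_posSemidef_sub {α : Type*} [Fintype α] {B C : Matrix α α 𝕜}
    (h : (B - C).PosSemidef) (x : α → 𝕜) :
    RCLike.re (star x ⬝ᵥ C *ᵥ x) ≤ RCLike.re (star x ⬝ᵥ B *ᵥ x) := by
  have := RCLike.nonneg_iff.mp (h.dotProduct_mulVec_nonneg x)
  simpa [sub_mulVec, dotProduct_sub] using this.1

end Matrix

section splitParty

variable {k : ℕ} (d : Fin k → ℕ) (m : ℕ) (t : Fin k)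

abbrev OtherParties : Type := ∀ j : {j : Fin k // j ≠ t}, Fin (d j.1)

def splitParty : ((∀ i, Fin (d i)) × Fin m) ≃ OtherParties d t × (Fin (d t) × Fin m) :=
  ((Equiv.piSplitAt t fun i => Fin (d i)).trans (Equiv.prodComm _ _)).prodCongr (.refl _)
    |>.trans (Equiv.prodAssoc _ _ _)

@[simp] lemma splitParty_apply (a : ∀ i, Fin (d i)) (μ : Fin m) :
    splitParty d m t (a, μ) = (fun j : {j // j ≠ t} => a j.1, (a t, μ)) := rfl

variable {d}

def otherPartiesProd (W : ∀ i, Matrix (Fin (d i)) (Fin (d i)) ℂ) :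
    Matrix (OtherParties d t) (OtherParties d t) ℂ :=
  of fun e e' => ∏ j : {j // j ≠ t}, W j.1 (e j) (e' j)

lemma posSemidef_otherPartiesProd {W : ∀ i, Matrix (Fin (d i)) (Fin (d i)) ℂ}
    (hW : ∀ i, (W i).PosSemidef) : (otherPartiesProd t W).PosSemidef :=
  posSemidef_of_forall_prod_apply _ fun j => (hW j.1).submatrix fun e : OtherParties d t => e j

lemma otherPartiesProd_update_self (W : ∀ i, Matrix (Fin (d i)) (Fin (d i)) ℂ)
    (X : Matrix (Fin (d t)) (Fin (d t)) ℂ) :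
    otherPartiesProd t (Function.update W t X) = otherPartiesProd t W := by
  ext e e'
  simp only [otherPartiesProd, of_apply]
  exact Finset.prod_congr rfl fun j _ => by rw [Function.update_of_ne j.2]

lemma Tfam_eq_submatrix_kronecker (W : ∀ i, Matrix (Fin (d i)) (Fin (d i)) ℂ) :
    Tfam m W = (otherPartiesProd t W ⊗ₖ (W t ⊗ₖ (1 : Matrix (Fin m) (Fin m) ℂ))).submatrix
      (splitParty d m t) (splitParty d m t) := by
  ext ⟨a, μ⟩ ⟨a', μ'⟩
  simp only [Tfam, submatrix_apply, splitParty_apply, kronecker_apply, otherPartiesProd, of_apply,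
    one_apply]
  split_ifs
  · rw [mul_one, Fintype.prod_eq_prod_compl_mul t]
    congr 1
    exact Finset.prod_subtype _ (fun x => by simp) _
  · simp

lemma extParty_eq_submatrix_one_kronecker (V : Matrix (Fin (d t) × Fin m) (Fin (d t) × Fin m) ℂ) :
    extParty t V = ((1 : Matrix (OtherParties d t) (OtherParties d t) ℂ) ⊗ₖ V).submatrix
      (splitParty d m t) (splitParty d m t) := by
  ext ⟨a, μ⟩ ⟨a', μ'⟩
  simp only [extParty, submatrix_apply, splitParty_apply, kronecker_apply, one_apply, funext_iff,
    Subtype.forall]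
  split_ifs <;> simp

end splitParty

theorem stmt_11_general (k : ℕ) (d : Fin k → ℕ)
    (m : ℕ) (t : Fin k)
    (V : Matrix (Fin (d t) × Fin m) (Fin (d t) × Fin m) ℂ)
    (Z : ∀ i, Matrix (Fin (d i)) (Fin (d i)) ℂ) (hZ : ∀ i, (Z i).PosSemidef)
    (Z' : Matrix (Fin (d t)) (Fin (d t)) ℂ)
    (hstep : (Z t ⊗ₖ (1 : Matrix (Fin m) (Fin m) ℂ) -
      Vᴴ * (Z' ⊗ₖ (1 : Matrix (Fin m) (Fin m) ℂ)) * V).PosSemidef)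
    (ψ : ((i : Fin k) → Fin (d i)) × Fin m → ℂ) :
    (star ψ ⬝ᵥ (Tfam m Z).mulVec ψ).re ≥
    (star ((extParty t V).mulVec ψ) ⬝ᵥ
      (Tfam m (Function.update Z t Z')).mulVec ((extParty t V).mulVec ψ)).re := by
  set e := splitParty d m t
  set A := otherPartiesProd t Z
  set I : Matrix (OtherParties d t) (OtherParties d t) ℂ := 1
  have hVψ : (extParty t V *ᵥ ψ) ∘ e.symm = (I ⊗ₖ V) *ᵥ (ψ ∘ e.symm) := by
    rw [extParty_eq_submatrix_one_kronecker m, submatrix_mulVec_equiv]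
    funext; simp [e, I]
  have hconj : (I ⊗ₖ V)ᴴ * (A ⊗ₖ (Z' ⊗ₖ 1)) * (I ⊗ₖ V) = A ⊗ₖ (Vᴴ * (Z' ⊗ₖ 1) * V) := by
    rw [conjTranspose_kronecker, conjTranspose_one, ← mul_kronecker_mul, ← mul_kronecker_mul,
      one_mul, mul_one]
  rw [Tfam_eq_submatrix_kronecker m t, Tfam_eq_submatrix_kronecker m t,
    star_dotProduct_submatrix_mulVec_equiv, star_dotProduct_submatrix_mulVec_equiv, hVψ,
    otherPartiesProd_update_self, Function.update_self, star_mulVec_dotProduct_mulVec_mulVec, hconj]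
  have hdiff := (posSemidef_otherPartiesProd t hZ).kronecker hstep
  rw [kronecker_sub] at hdiff
  exact re_dotProduct_mulVec_le_of_posSemidef_sub hdiff _

/-- Monotonicity step `F_j ≥ F_{j+1}` in the multiparty extension of Kitaev's
lower bound: if `V†·(Z' ⊗ I_m)·V ⪯ (Z t) ⊗ I_m` for the party `t` moving in the
current round, then the certificate value cannot increase along the round. -/
theorem stmt_11 (k : ℕ) (hk : 1 ≤ k) (d : Fin k → ℕ) (hd : ∀ i, 1 ≤ d i)
    (m : ℕ) (hm : 1 ≤ m) (t : Fin k)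
    (V : Matrix (Fin (d t) × Fin m) (Fin (d t) × Fin m) ℂ)
    (hV : V ∈ Matrix.unitaryGroup (Fin (d t) × Fin m) ℂ)
    (Z : ∀ i, Matrix (Fin (d i)) (Fin (d i)) ℂ) (hZ : ∀ i, (Z i).PosSemidef)
    (Z' : Matrix (Fin (d t)) (Fin (d t)) ℂ) (hZ' : Z'.PosSemidef)
    (hstep : (Z t ⊗ₖ (1 : Matrix (Fin m) (Fin m) ℂ) -
      Vᴴ * (Z' ⊗ₖ (1 : Matrix (Fin m) (Fin m) ℂ)) * V).PosSemidef)
    (ψ : ((i : Fin k) → Fin (d i)) × Fin m → ℂ) :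
    (star ψ ⬝ᵥ (Tfam m Z).mulVec ψ).re ≥
    (star ((extParty t V).mulVec ψ) ⬝ᵥ
      (Tfam m (Function.update Z t Z')).mulVec ((extParty t V).mulVec ψ)).re :=
  stmt_11_general k d m t V Z hZ Z' hstep ψ
end

section
/- There exists a real constant c > 0 such that the following holds: for every natural number n ≥ 3 and every real sequence (P_j) with P_3 ≤ 63/64 and, for all j with 4 ≤ j ≤ n, 1 − P_j ≥ (1 − P_{j−1})·(1/2 − 1/√(2^{j−1} − 1)), one has 1 − P_n ≥ c/2^n. (This is the inductive estimate showing that the k = 2^n-party tournament protocol has bias at most 1/2 − c/k.) -/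
private lemma aux_factor_ge {j : ℕ} (hj : 4 ≤ j) :
    (1:ℝ)/2 - 1 / Real.sqrt (2 ^ (j-1) - 1) ≥ 1/9 := by
  have h8 : (2:ℝ)^3 ≤ 2^(j-1) := pow_le_pow_right₀ (by norm_num) (by omega)
  have h7 : (7:ℝ) ≤ 2^(j-1) - 1 := by norm_num at h8 ⊢; linarith
  have hs : (21/8:ℝ) ≤ Real.sqrt (2^(j-1)-1) := by
    have : (21/8:ℝ) ≤ Real.sqrt 7 := (Real.le_sqrt (by norm_num) (by norm_num)).mpr (by norm_num)
    exact this.trans (Real.sqrt_le_sqrt h7)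
  have hpos : (0:ℝ) < Real.sqrt (2^(j-1)-1) := by linarith
  have : 1 / Real.sqrt (2^(j-1)-1) ≤ 8/21 := by
    rw [div_le_div_iff₀ hpos (by norm_num)]; linarith
  linarith

private lemma aux_inv_le {j : ℕ} (hj : 4 ≤ j) :
    1 / Real.sqrt (2 ^ (j-1) - 1) ≤ 2 * ((Real.sqrt 2)⁻¹) ^ j := by
  have hq : (0:ℝ) < Real.sqrt 2 := Real.sqrt_pos.mpr (by norm_num)
  have e1 : ((Real.sqrt 2)^(j-2))^2 = (2:ℝ)^(j-2) := by
    rw [← pow_mul, mul_comm, pow_mul, Real.sq_sqrt (by norm_num)]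
  have e2 : Real.sqrt ((2:ℝ)^(j-2)) = (Real.sqrt 2)^(j-2) := by
    rw [← e1, Real.sqrt_sq (by positivity)]
  have h1 : (1:ℝ) ≤ 2^(j-2) := one_le_pow₀ (by norm_num)
  have hle : (2:ℝ)^(j-2) ≤ 2^(j-1) - 1 := by
    have : (2:ℝ)^(j-1) = 2^(j-2) * 2 := by
      rw [← pow_succ]; congr 1; omega
    linarith
  have h3 : (Real.sqrt 2)^(j-2) ≤ Real.sqrt ((2:ℝ)^(j-1) - 1) := by
    rw [← e2]; exact Real.sqrt_le_sqrt hle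
  have h4 : (Real.sqrt 2)^j = 2 * (Real.sqrt 2)^(j-2) := by
    have hj2 : j - 2 + 2 = j := by omega
    have e3 : (Real.sqrt 2)^(j-2) * (Real.sqrt 2)^2 = (Real.sqrt 2)^j := by
      rw [← pow_add, hj2]
    rw [Real.sq_sqrt (by norm_num : (0:ℝ) ≤ 2)] at e3
    linarith
  have hX : (0:ℝ) < Real.sqrt ((2:ℝ)^(j-1) - 1) := by
    have := pow_pos hq (j-2); linarith
  have hqj : (0:ℝ) < (Real.sqrt 2)^j := pow_pos hq j
  rw [inv_pow, div_le_iff₀ hX]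
  have e4 : 2 * ((Real.sqrt 2)^j)⁻¹ * Real.sqrt ((2:ℝ)^(j-1) - 1) =
      (2 * Real.sqrt ((2:ℝ)^(j-1) - 1)) / ((Real.sqrt 2)^j) := by ring
  rw [e4, le_div_iff₀ hqj, one_mul, h4]
  linarith

/-- Inductive estimate for the multiparty tournament protocol:
there is a constant `c > 0` such that any sequence `P` with base case `P 3 ≤ 63/64`
and the recursive estimate `1 - P j ≥ (1 - P (j-1)) (1/2 - 1/√(2^{j-1} - 1))`
satisfies `1 - P n ≥ c / 2^n`. -/
theorem stmt_15 : ∃ c : ℝ, 0 < c ∧ ∀ n : ℕ, 3 ≤ n → ∀ P : ℕ → ℝ,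
    P 3 ≤ 63 / 64 →
    (∀ j : ℕ, 4 ≤ j → j ≤ n →
      1 - P j ≥ (1 - P (j - 1)) * (1 / 2 - 1 / Real.sqrt (2 ^ (j - 1) - 1))) →
    1 - P n ≥ c / 2 ^ n := by
  set s : ℝ := (Real.sqrt 2)⁻¹ with hs_def
  have hq : (0:ℝ) < Real.sqrt 2 := Real.sqrt_pos.mpr (by norm_num)
  have hq2 : Real.sqrt 2 ^ 2 = 2 := Real.sq_sqrt (by norm_num)
  have hq14 : (1.4:ℝ) ≤ Real.sqrt 2 := by nlinarith
  have hs0 : (0:ℝ) ≤ s := by positivity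
  have hs1 : s ≤ 1 := by
    rw [hs_def]
    rw [inv_le_one_iff₀]
    right; nlinarith
  have hs2 : s^2 = 1/2 := by rw [hs_def, inv_pow, hq2]; norm_num
  have hs8 : s^8 = 1/16 := by
    have : s^8 = (s^2)^4 := by ring
    rw [this, hs2]; norm_num
  refine ⟨1/4000000, by norm_num, ?_⟩
  intro n hn P hP3 hrec
  -- Phase 1 : 3 ≤ m ≤ min n 8
  have phase1 : ∀ m : ℕ, 3 ≤ m → m ≤ n → m ≤ 8 →
      1 - P m ≥ (1/64 : ℝ) * (1/9)^(m-3) := by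
    intro m hm
    induction m, hm using Nat.le_induction with
    | base => intro _ _; norm_num; linarith
    | succ m hm ih =>
      intro h1 h2
      have ihm := ih (by omega) (by omega)
      have hr := hrec (m+1) (by omega) h1
      simp only [Nat.add_sub_cancel] at hr
      have hF : (1:ℝ)/2 - 1/Real.sqrt (2^((m+1)-1) - 1) ≥ 1/9 :=
        aux_factor_ge (by omega)
      simp only [Nat.add_sub_cancel] at hF
      have hPm : (0:ℝ) ≤ 1 - P m := by
        have : (0:ℝ) < (1/64 : ℝ) * (1/9)^(m-3) := by positivity
        linarith
      have hstep : (1/64 : ℝ) * (1/9)^(m-3) * (1/9) ≤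
          (1 - P m) * (1/2 - 1/Real.sqrt (2^m - 1)) := by
        have h9 : (0:ℝ) ≤ (1:ℝ)/9 := by norm_num
        calc (1/64 : ℝ) * (1/9)^(m-3) * (1/9)
            ≤ (1 - P m) * (1/9) := by
              apply mul_le_mul_of_nonneg_right ihm h9
          _ ≤ (1 - P m) * (1/2 - 1/Real.sqrt (2^m - 1)) := by
              apply mul_le_mul_of_nonneg_left hF hPm
      have hexp : m + 1 - 3 = (m - 3) + 1 := by omega
      rw [hexp, pow_succ, ← mul_assoc]
      linarith
  -- Phase 2 : 8 ≤ m ≤ n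
  have phase2 : ∀ m : ℕ, 8 ≤ m → m ≤ n →
      1 - P m ≥ (1/4000000 : ℝ) * (1 + 100 * s^m) / 2^m := by
    intro m hm
    induction m, hm using Nat.le_induction with
    | base =>
      intro h8n
      have hb := phase1 8 (by norm_num) h8n (le_refl 8)
      have : (1/4000000 : ℝ) * (1 + 100 * s^8) / 2^8 ≤ (1/64:ℝ) * (1/9)^(8-3) := by
        rw [hs8]; norm_num
      linarith
    | succ m hm ih =>
      intro h1
      have ihm := ih (by omega)
      have hr := hrec (m+1) (by omega) h1
      simp only [Nat.add_sub_cancel] at hr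
      have hF : (1:ℝ)/2 - 1/Real.sqrt (2^((m+1)-1) - 1) ≥ 1/9 :=
        aux_factor_ge (by omega)
      have he : 1/Real.sqrt (2^((m+1)-1) - 1) ≤ 2 * s^(m+1) :=
        aux_inv_le (by omega)
      simp only [Nat.add_sub_cancel] at hF he
      have he0 : (0:ℝ) ≤ 1/Real.sqrt (2^m - 1) := by positivity
      set y : ℝ := s^(m+1) with hy_def
      have hy0 : (0:ℝ) ≤ y := by positivity
      have hy9 : y ≤ Real.sqrt 2 / 32 := by
        have h9 : s^(m+1) ≤ s^9 := pow_le_pow_of_le_one hs0 hs1 (by omega)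
        have : s^9 = Real.sqrt 2 / 32 := by
          have e : s^9 = s^8 * s := by ring
          rw [e, hs8, hs_def]
          rw [eq_div_iff (by norm_num : (32:ℝ) ≠ 0)]
          field_simp
          nlinarith
        linarith [h9, this.symm.le, this.le]
      have hsm : s^m = Real.sqrt 2 * y := by
        have e : y = s^m * s := by rw [hy_def]; ring
        have : Real.sqrt 2 * s = 1 := by
          rw [hs_def, mul_inv_cancel₀ (ne_of_gt hq)]
        calc s^m = s^m * (Real.sqrt 2 * s) := by rw [this]; ring
          _ = Real.sqrt 2 * y := by rw [e]; ring
      -- key inequality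
      have key : (1/4000000 : ℝ) * (1 + 100 * y) / 2 ≤
          ((1/4000000 : ℝ) * (1 + 100 * s^m)) * (1/2 - 1/Real.sqrt (2^m - 1)) := by
        rw [hsm]
        set e : ℝ := 1/Real.sqrt (2^m - 1)
        nlinarith [mul_nonneg hy0 hy0, mul_nonneg hy0 he0,
          mul_le_mul_of_nonneg_left he (by positivity : (0:ℝ) ≤ 1 + 100 * (Real.sqrt 2 * y)),
          mul_le_mul_of_nonneg_left hy9 (mul_nonneg (by norm_num : (0:ℝ) ≤ 400) (mul_nonneg hq.le hy0))]
      have hPm : (0:ℝ) ≤ 1 - P m := by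
        have : (0:ℝ) < (1/4000000 : ℝ) * (1 + 100 * s^m) / 2^m := by positivity
        linarith
      have hF0 : (0:ℝ) ≤ 1/2 - 1/Real.sqrt (2^m - 1) := by linarith
      have h2m : (0:ℝ) < (2:ℝ)^m := by positivity
      calc (1/4000000 : ℝ) * (1 + 100 * s^(m+1)) / 2^(m+1)
          = ((1/4000000 : ℝ) * (1 + 100 * y) / 2) / 2^m := by
            rw [pow_succ]; ring
        _ ≤ (((1/4000000 : ℝ) * (1 + 100 * s^m)) * (1/2 - 1/Real.sqrt (2^m - 1))) / 2^m := by
            gcongr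
        _ = ((1/4000000 : ℝ) * (1 + 100 * s^m) / 2^m) * (1/2 - 1/Real.sqrt (2^m - 1)) := by
            ring
        _ ≤ (1 - P m) * (1/2 - 1/Real.sqrt (2^m - 1)) := by
            apply mul_le_mul_of_nonneg_right ihm hF0
        _ ≤ 1 - P (m+1) := hr
  -- conclude
  rcases le_or_gt n 8 with h8 | h8
  · have hb := phase1 n hn (le_refl n) h8
    have h1 : (1/9 : ℝ)^(n-3) ≥ (1/9:ℝ)^5 :=
      pow_le_pow_of_le_one (by norm_num) (by norm_num) (by omega)
    have h2 : (2:ℝ)^n ≥ 2^3 := pow_le_pow_right₀ (by norm_num) hn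
    have h3 : (1/4000000 : ℝ) / 2^n ≤ (1/4000000 : ℝ) / 2^3 := by
      apply div_le_div_of_nonneg_left (by norm_num) (by norm_num) h2
    norm_num at h2 h3 ⊢
    nlinarith
  · have hb := phase2 n (by omega) (le_refl n)
    have hsn : (0:ℝ) ≤ s^n := by positivity
    have : (1/4000000 : ℝ) / 2^n ≤ (1/4000000 : ℝ) * (1 + 100 * s^n) / 2^n := by
      apply div_le_div_of_nonneg_right _ (by positivity)
      nlinarith
    linarith
end

section
/- Let n ≥ 0 be a natural number. Define the GHZ-type amplitude function φ : Fin 2 × Fin 2 × (Fin n → Fin 2) → ℂ by φ(a,b,y) = 1/√2 if a = b and y i = a for all i, and φ(a,b,y) = 0 otherwise. Fix r : Fin n → Fin 2 and define ξ_r : Fin 2 × Fin 2 → ℂ by ξ_r(a,b) = Σ_{y : Fin n → Fin 2} φ(a,b,y) · Π_{i} ((−1)^{(r i)·(y i)} / √2), where the values r i, y i ∈ Fin 2 are interpreted as the integers 0 or 1. Then ξ_r(0,0) = 2^{−n/2}/√2, ξ_r(1,1) = (−1)^{Σ_i r i} · 2^{−n/2}/√2, and ξ_r(0,1) = ξ_r(1,0)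 = 0. (Thus each Hadamard-basis measurement outcome r of the last n qubits of an (n+2)-qubit GHZ state occurs with probability 2^{−n} and leaves the first two qubits in the EPR state (|00⟩ + (−1)^{parity(r)}|11⟩)/√2.) -/
open Finset

lemma Fintype.sum_ite_and_forall_eq_mul {ι α M : Type*} [DecidableEq ι] [Fintype ι]
    [DecidableEq α] [Fintype α] [NonUnitalNonAssocSemiring M]
    (a b : α) [∀ y : ι → α, Decidable (a = b ∧ ∀ i, y i = a)] (c : M) (f : (ι → α) → M) :
    ∑ y : ι → α, (if a = b ∧ ∀ i, y i = a then c else 0) * f y =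
      if a = b then c * f (fun _ => a) else 0 := by
  split_ifs with hab
  · subst hab
    rw [Fintype.sum_eq_single (fun _ => a)]
    · simp
    · intro y hy
      have : ¬ ∀ i, y i = a := fun h => hy (funext h)
      simp [this]
  · simp only [hab, false_and, if_false, zero_mul, sum_const_zero]

lemma Finset.prod_pow_div_const {ι K : Type*} [DivisionCommMonoid K] (s : Finset ι)
    (x d : K) (k : ι → ℕ) :
    ∏ i ∈ s, x ^ k i / d = x ^ (∑ i ∈ s, k i) / d ^ s.card := by
  rw [prod_div_distrib, prod_pow_eq_pow_sum, prod_const]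

/-- Measuring the last `n` qubits of an `(n+2)`-qubit GHZ state in the Hadamard
basis: for every outcome `r`, the unnormalized post-measurement amplitude
`ξ_r` of the first two qubits is `2^{-n/2}/√2` on `|00⟩`,
`(-1)^{parity r}·2^{-n/2}/√2` on `|11⟩`, and `0` on `|01⟩, |10⟩`. -/
theorem stmt_17 (n : ℕ) (r : Fin n → Fin 2) :
    let φ : Fin 2 × Fin 2 × (Fin n → Fin 2) → ℂ := fun x =>
      if x.1 = x.2.1 ∧ ∀ i, x.2.2 i = x.1 then 1 / (Real.sqrt 2 : ℂ) else 0
    let ξ : Fin 2 × Fin 2 → ℂ := fun ab =>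
      ∑ y : Fin n → Fin 2, φ (ab.1, ab.2, y) *
        ∏ i, ((-1 : ℂ) ^ ((r i : ℕ) * (y i : ℕ)) / (Real.sqrt 2 : ℂ))
    ξ (0, 0) = 1 / ((Real.sqrt 2 : ℂ) ^ n * (Real.sqrt 2 : ℂ)) ∧
    ξ (1, 1) = (-1 : ℂ) ^ (∑ i, (r i : ℕ)) /
      ((Real.sqrt 2 : ℂ) ^ n * (Real.sqrt 2 : ℂ)) ∧
    ξ (0, 1) = 0 ∧ ξ (1, 0) = 0 := by
  intro φ ξ
  -- Only the constant string `y = (a, …, a)` carries GHZ amplitude, so each `ξ (a, b)`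
  -- collapses to a single product of Hadamard entries.
  have hξ : ∀ a b, ξ (a, b) = if a = b then
      1 / (Real.sqrt 2 : ℂ) * ((-1) ^ (∑ i, (r i : ℕ) * (a : ℕ)) / (Real.sqrt 2 : ℂ) ^ n)
      else 0 := by
    intro a b
    simp only [ξ, φ]
    rw [Fintype.sum_ite_and_forall_eq_mul, prod_pow_div_const, card_univ, Fintype.card_fin]
  refine ⟨by simp [hξ], ?_, by simp [hξ], by simp [hξ]⟩
  simp [hξ]
  ring
end
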